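/- arXiv:1704.03772 — 2 statements merged into one kernel-verified Lean document; each statement's English description precedes it below -/
import Mathlib

section
/- Let κ > ℵ₀ be a regular cardinal and f : 𝒫(B) × 𝒫(A) → 𝒫(B) a monotone map that is κ-continuous in each variable. Then the map g : 𝒫(A) → 𝒫(B) sending X to the greatest fixed point of Z ↦ f(Z, X) is κ-continuous, i.e., g(X) = ⋃ { g(X') : X' ⊆ X, card(X') < κ } for all X ⊆ A. -/
open Set

universe u v

/-- A family of subsets is κ-directed if every subfamily of cardinality < κ
has an upper bound in the family. -/
def KDirected {A : Type u} (κ : Cardinal.{u}) (I : Set (Set A)) : Prop :=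
  ∀ J ⊆ I, Cardinal.mk ↥J < κ → ∃ U ∈ I, ∀ V ∈ J, V ⊆ U

/-- A map between powersets is κ-continuous if it preserves unions of κ-directed families. -/
def KCont {A B : Type u} (κ : Cardinal.{u}) (f : Set A → Set B) : Prop :=
  ∀ I : Set (Set A), KDirected κ I → f (⋃₀ I) = ⋃ S ∈ I, f S

/-!
Let `Z ⊆ f Z X` be a post-fixed point and `b ∈ Z`. By the two continuity hypotheses, every
`c ∈ Z` lies in `f Z_c X_c` for some `Z_c ⊆ Z` and `X_c ⊆ X` of size `< κ`. Closing `{b}`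
under `c ↦ Z_c` in `ω` steps gives a set `W ∋ b` of size `< κ` (this is where `κ > ℵ₀` and
regularity enter), and `W ⊆ f W X'` for `X' = ⋃_{c ∈ W} X_c`, which is again of size `< κ`.
So `b` lies in the greatest fixed point of `f · X'`.
-/

open Cardinal

section Small

variable {α β : Type u} {κ : Cardinal.{u}}

lemma KDirected.small_subsets (hκ : κ.IsRegular) (S : Set α) :
    KDirected κ {T | T ⊆ S ∧ #T < κ} := by
  intro J hJ hJκ
  refine ⟨⋃₀ J, ⟨sUnion_subset fun V hV => (hJ hV).1, ?_⟩, fun V hV => subset_sUnion_of_mem hV⟩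
  rw [sUnion_eq_iUnion, card_iUnion_lt_iff_forall_of_isRegular hκ hJκ]
  exact fun V => (hJ V.2).2

lemma sUnion_small_subsets (hκ : κ.IsRegular) (S : Set α) :
    ⋃₀ {T | T ⊆ S ∧ #T < κ} = S := by
  refine (sUnion_subset fun T hT => hT.1).antisymm fun a ha => ?_
  exact ⟨{a}, ⟨singleton_subset_iff.2 ha, by simpa using one_lt_aleph0.trans_le hκ.aleph0_le⟩, rfl⟩

lemma KCont.exists_small_of_mem {h : Set α → Set β} (hh : KCont κ h) (hκ : κ.IsRegular)
    {S : Set α} {b : β} (hb : b ∈ h S) : ∃ T ∈ {T | T ⊆ S ∧ #T < κ}, b ∈ h T := by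
  rw [← sUnion_small_subsets hκ S, hh _ (KDirected.small_subsets hκ S)] at hb
  obtain ⟨T, hT, hbT⟩ := mem_iUnion₂.1 hb
  exact ⟨T, hT, hbT⟩

lemma mk_iUnion_nat_lt (hκ : κ.IsRegular) (hκ₀ : ℵ₀ < κ) {Y : ℕ → Set α}
    (hY : ∀ n, #(Y n) < κ) : #(⋃ n, Y n) < κ := by
  rw [← Equiv.ulift.{u}.surjective.iUnion_comp Y,
    card_iUnion_lt_iff_forall_of_isRegular hκ (mk_le_aleph0.trans_lt hκ₀)]
  exact fun n => hY n.down

lemma exists_small_closed_superset (hκ : κ.IsRegular) (hκ₀ : ℵ₀ < κ) {Z Y : Set α}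
    (s : α → Set α) (hsZ : ∀ c ∈ Z, s c ⊆ Z) (hs : ∀ c ∈ Z, #(s c) < κ)
    (hYZ : Y ⊆ Z) (hY : #Y < κ) :
    ∃ W, Y ⊆ W ∧ W ⊆ Z ∧ #W < κ ∧ ∀ c ∈ W, s c ⊆ W := by
  let step : Set α → Set α := fun T => T ∪ ⋃ c ∈ T, s c
  have hstep : ∀ n, step^[n] Y ⊆ Z ∧ #(step^[n] Y) < κ := by
    intro n
    induction n with
    | zero => exact ⟨hYZ, hY⟩
    | succ n ih =>
      rw [Function.iterate_succ_apply']
      refine ⟨union_subset ih.1 (iUnion₂_subset fun c hc => hsZ c (ih.1 hc)), ?_⟩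
      refine (mk_union_le _ _).trans_lt (add_lt_of_lt hκ.aleph0_le ih.2 ?_)
      exact (card_biUnion_lt_iff_forall_of_isRegular hκ ih.2).2 fun c hc => hs c (ih.1 hc)
  refine ⟨⋃ n, step^[n] Y, subset_iUnion_of_subset 0 subset_rfl,
    iUnion_subset fun n => (hstep n).1, mk_iUnion_nat_lt hκ hκ₀ fun n => (hstep n).2, ?_⟩
  intro c hc
  obtain ⟨n, hn⟩ := mem_iUnion.1 hc
  refine subset_iUnion_of_subset (n + 1) ?_
  rw [Function.iterate_succ_apply']
  exact subset_union_of_subset_right (subset_biUnion_of_mem hn) _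

end Small

theorem stmt7 {A B : Type u} (κ : Cardinal.{u}) (hκ : κ.IsRegular)
    (haleph : Cardinal.aleph0 < κ)
    (f : Set B → Set A → Set B)
    (hmono : ∀ Z Z' X X', Z ⊆ Z' → X ⊆ X' → f Z X ⊆ f Z' X')
    (hc1 : ∀ X, KCont κ (fun Z => f Z X))
    (hc2 : ∀ Z, KCont κ (fun X => f Z X)) :
    ∀ X : Set A,
      ⋃₀ {Z : Set B | Z ⊆ f Z X} =
        ⋃ X' ∈ {X' : Set A | X' ⊆ X ∧ Cardinal.mk ↥X' < κ},
          ⋃₀ {Z : Set B | Z ⊆ f Z X'} := by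
  intro X
  refine subset_antisymm ?_ (iUnion₂_subset fun X' hX' => sUnion_subset_sUnion
    fun Z hZ => hZ.trans (hmono Z Z X' X subset_rfl hX'.1))
  rintro b ⟨Z, hZ, hbZ⟩
  have hwitness : ∀ c ∈ Z, ∃ Z' X', (Z' ⊆ Z ∧ #Z' < κ) ∧ (X' ⊆ X ∧ #X' < κ) ∧ c ∈ f Z' X' := by
    intro c hc
    obtain ⟨Z', hZ', hcZ'⟩ := (hc1 X).exists_small_of_mem hκ (hZ hc)
    obtain ⟨X', hX', hcX'⟩ := (hc2 Z').exists_small_of_mem hκ hcZ'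
    exact ⟨Z', X', hZ', hX', hcX'⟩
  choose! zc xc hzc hxc hmem using hwitness
  obtain ⟨W, hbW, hWZ, hW, hWclosed⟩ := exists_small_closed_superset hκ haleph zc
    (fun c hc => (hzc c hc).1) (fun c hc => (hzc c hc).2) (singleton_subset_iff.2 hbZ)
    (by simpa using one_lt_aleph0.trans haleph)
  have hX'small : ⋃ c ∈ W, xc c ∈ {X' : Set A | X' ⊆ X ∧ #X' < κ} :=
    ⟨iUnion₂_subset fun c hc => (hxc c (hWZ hc)).1,
      (card_biUnion_lt_iff_forall_of_isRegular hκ hW).2 fun c hc => (hxc c (hWZ hc)).2⟩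
  have hWpost : W ⊆ f W (⋃ c ∈ W, xc c) := fun c hc =>
    hmono _ _ _ _ (hWclosed c hc) (subset_biUnion_of_mem hc) (hmem c (hWZ hc))
  exact mem_iUnion₂.2 ⟨_, hX'small, W, hWpost, hbW rfl⟩
end

section
/- Let ψ : 𝒫(A) → 𝒫(A) be monotone, let μ = lfp(ψ) denote its least fixed point, and define φ : 𝒫(A) → 𝒫(A) by φ(S) = (A \ μ) ∪ ψ(S ∩ μ). Then φ is monotone and for every ordinal γ ≥ 1, the iterate φ^γ(∅) equals (A \ μ) ∪ ψ^γ(∅) (i.e., the Heyting implication μ → ψ^γ(∅) in 𝒫(A)). Consequently, the least fixed point of φ is all of A. -/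
/-! Since every `ψ`-iterate lies below the prefixed point `μ`, the iterates of `φ` cut down to `μ`
are exactly those of `ψ`; and every stage `φ^γ(∅)` with `γ ≥ 1` is an image of `φ` or contains one,
hence contains `μᶜ`. For the fixed point: a prefixed point `S` of `φ` contains `μᶜ`, and `S ∩ μ` is
a prefixed point of `ψ`, so `S` also contains `μ = lfp ψ`. -/

open Set

universe u v
/-- Ordinal-indexed iterates of a map on a powerset, starting from ∅,
taking unions at limit stages. -/
noncomputable def iter {A : Type u} (f : Set A → Set A) (o : Ordinal.{v}) : Set A :=
  Ordinal.limitRecOn o ∅ (fun _ ih => f ih)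
    (fun o _ ih => ⋃ (b : Ordinal.{v}) (h : b < o), ih b h)

section Iter

variable {A : Type u} (f : Set A → Set A)

theorem iter_zero : iter f (0 : Ordinal.{v}) = ∅ :=
  Ordinal.limitRecOn_zero ..

theorem iter_succ (o : Ordinal.{v}) : iter f (o + 1) = f (iter f o) :=
  Ordinal.limitRecOn_add_one ..

theorem iter_limit {o : Ordinal.{v}} (h : Order.IsSuccLimit o) :
    iter f o = ⋃ (b : Ordinal.{v}) (_ : b < o), iter f b :=
  Ordinal.limitRecOn_limit _ _ _ _ h

variable {f}

theorem iter_subset_of_map_subset (hf : Monotone f) {S : Set A} (hS : f S ⊆ S) (o : Ordinal.{v}) :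
    iter f o ⊆ S := by
  induction o using Ordinal.limitRecOn with
  | zero => simp [iter_zero]
  | add_one o ih => rw [iter_succ]; exact (hf ih).trans hS
  | limit o ho ih => rw [iter_limit f ho]; exact iUnion₂_subset ih

theorem subset_iter_of_subset_map {c : Set A} (hc : ∀ S, c ⊆ f S) {o : Ordinal.{v}} (ho : 1 ≤ o) :
    c ⊆ iter f o := by
  induction o using Ordinal.limitRecOn with
  | zero => simp at ho
  | add_one o _ => rw [iter_succ]; exact hc _
  | limit o hlim _ =>
    rw [iter_limit f hlim]
    refine (hc (iter f 0)).trans ?_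
    rw [← iter_succ f, zero_add]
    exact subset_iUnion₂ (s := fun b (_ : b < o) => iter f b) 1 (Ordinal.one_lt_of_isSuccLimit hlim)

end Iter

section Relativized

variable {A : Type u} {ψ φ : Set A → Set A} {μ : Set A}

theorem monotone_of_eq_compl_union (hψ : Monotone ψ) (hφ : ∀ S, φ S = μᶜ ∪ ψ (S ∩ μ)) :
    Monotone φ := by
  intro S T hST
  rw [hφ, hφ]
  exact union_subset_union_right _ (hψ (inter_subset_inter_left _ hST))

theorem iter_inter_eq_of_eq_compl_union (hψ : Monotone ψ) (hμ : ψ μ ⊆ μ)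
    (hφ : ∀ S, φ S = μᶜ ∪ ψ (S ∩ μ)) (o : Ordinal.{v}) : iter φ o ∩ μ = iter ψ o := by
  induction o using Ordinal.limitRecOn with
  | zero => simp [iter_zero]
  | add_one o ih =>
    rw [iter_succ, iter_succ, hφ, ih, union_inter_distrib_right, compl_inter_self, empty_union,
      inter_eq_left]
    exact (hψ (iter_subset_of_map_subset hψ hμ o)).trans hμ
  | limit o ho ih =>
    rw [iter_limit _ ho, iter_limit _ ho, iUnion₂_inter]
    exact iUnion₂_congr ih

theorem iter_eq_compl_union_of_eq_compl_union (hψ : Monotone ψ) (hμ : ψ μ ⊆ μ)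
    (hφ : ∀ S, φ S = μᶜ ∪ ψ (S ∩ μ)) {o : Ordinal.{v}} (ho : 1 ≤ o) :
    iter φ o = μᶜ ∪ iter ψ o := by
  have hcompl : μᶜ ⊆ iter φ o :=
    subset_iter_of_subset_map (fun S => (hφ S).symm ▸ subset_union_left) ho
  rw [← inter_union_compl (iter φ o) μ, iter_inter_eq_of_eq_compl_union hψ hμ hφ,
    inter_eq_right.mpr hcompl, union_comm]

theorem sInter_prefixed_eq_univ_of_eq_compl_union (ψ : Set A →o Set A)
    (hφ : ∀ S, φ S = (OrderHom.lfp ψ)ᶜ ∪ ψ (S ∩ OrderHom.lfp ψ)) :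
    ⋂₀ {S : Set A | φ S ⊆ S} = univ := by
  refine eq_univ_of_univ_subset (subset_sInter fun S hS => ?_)
  rw [mem_ofPred_eq, hφ, union_subset_iff] at hS
  have hlfp : ψ (S ∩ OrderHom.lfp ψ) ⊆ OrderHom.lfp ψ :=
    (ψ.mono inter_subset_right).trans (OrderHom.map_lfp ψ).le
  have hle : OrderHom.lfp ψ ⊆ S :=
    (OrderHom.lfp_le ψ (subset_inter hS.2 hlfp)).trans inter_subset_left
  rw [← union_compl_self (OrderHom.lfp ψ)]
  exact union_subset hle hS.1

end Relativized

theorem stmt12 {A : Type u} (ψ : Set A → Set A) (hψ : Monotone ψ)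
    (μ : Set A) (hμ : μ = ⋂₀ {S : Set A | ψ S ⊆ S})
    (φ : Set A → Set A) (hφ : ∀ S, φ S = μᶜ ∪ ψ (S ∩ μ)) :
    Monotone φ ∧ (∀ γ : Ordinal.{v}, 1 ≤ γ → iter φ γ = μᶜ ∪ iter ψ γ) ∧
      ⋂₀ {S : Set A | φ S ⊆ S} = Set.univ := by
  obtain rfl : μ = OrderHom.lfp ⟨ψ, hψ⟩ := hμ
  have hμ : ψ (OrderHom.lfp ⟨ψ, hψ⟩) ⊆ OrderHom.lfp ⟨ψ, hψ⟩ :=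
    (OrderHom.map_lfp (⟨ψ, hψ⟩ : Set A →o Set A)).le
  exact ⟨monotone_of_eq_compl_union hψ hφ,
    fun _ => iter_eq_compl_union_of_eq_compl_union hψ hμ hφ,
    sInter_prefixed_eq_univ_of_eq_compl_union ⟨ψ, hψ⟩ hφ⟩
end
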